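/- Let m be a symmetric positive definite l×l real matrix, x, y ∈ ℝ^l nonzero vectors, U = ⟨x, y⟩ ≠ 0, and define p = −m + (7/(3U)) y yᵀ. Suppose moreover that 3 p x = 4 y. Then p is invertible and p⁻¹ = −m⁻¹ + (7/(4U)) x xᵀ. -/

import Mathlib

/-!
Since `vecMulVec y y *ᵥ x = U • y`, the relation `3 p x = 4 y` reads `-3 m x + 7 y = 4 y`, i.e.
`m x = y`, and then `yᵀ m⁻¹ = xᵀ` by symmetry of `m`. Multiplying out,
`(-m + a y yᵀ)(-m⁻¹ + b x xᵀ) = 1 + (a b U - a - b) y xᵀ`, and `a = 7/(3U)`, `b = 7/(4U)` satisfy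
`a b U = a + b`.
-/

open Matrix

namespace Matrix

variable {n K : Type*} [Fintype n] [CommRing K]

theorem neg_add_smul_vecMulVec_mulVec (m : Matrix n n K) (a : K) (x y : n → K) :
    (-m + a • vecMulVec y y) *ᵥ x = -(m *ᵥ x) + (a * (y ⬝ᵥ x)) • y := by
  rw [add_mulVec, neg_mulVec, smul_mulVec, vecMulVec_mulVec, op_smul_eq_smul, smul_smul]

variable [DecidableEq n]

theorem neg_add_smul_vecMulVec_mul_eq_one {m : Matrix n n K} (hm : m.IsSymm) (hunit : IsUnit m)
    {x y : n → K} (hmx : m *ᵥ x = y) {a b : K} (hab : a * b * (y ⬝ᵥ x) = a + b) :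
    (-m + a • vecMulVec y y) * (-m⁻¹ + b • vecMulVec x x) = 1 := by
  have hdet : IsUnit m.det := (isUnit_iff_isUnit_det m).mp hunit
  have hinv : m * m⁻¹ = 1 := mul_nonsing_inv m hdet
  have hym : y ᵥ* m⁻¹ = x := by
    rw [← mulVec_transpose, hm.inv.eq, ← hmx, mulVec_mulVec, nonsing_inv_mul m hdet, one_mulVec]
  calc (-m + a • vecMulVec y y) * (-m⁻¹ + b • vecMulVec x x)
      = m * m⁻¹ - b • (m * vecMulVec x x) - a • (vecMulVec y y * m⁻¹)
          + (a * b) • (vecMulVec y y * vecMulVec x x) := by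
        simp only [add_mul, mul_add, neg_mul, mul_neg, Matrix.mul_smul, Matrix.smul_mul,
          smul_smul]
        module
    _ = 1 + (a * b * (y ⬝ᵥ x) - a - b) • vecMulVec y x := by
        rw [hinv, mul_vecMulVec, vecMulVec_mul, vecMulVec_mul_vecMulVec, hmx, hym, vecMulVec_smul]
        module
    _ = 1 := by rw [hab, add_sub_cancel_left, sub_self, zero_smul, add_zero]

end Matrix

theorem stmt_2_general {l : ℕ} (m : Matrix (Fin l) (Fin l) ℝ)
    (hmpos : m.PosDef) (x y : Fin l → ℝ)
    (U : ℝ) (hU : U = x ⬝ᵥ y) (hU0 : U ≠ 0)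
    (p : Matrix (Fin l) (Fin l) ℝ)
    (hp : p = -m + (7 / (3 * U)) • vecMulVec y y)
    (hpx : (3 : ℝ) • p.mulVec x = (4 : ℝ) • y) :
    IsUnit p ∧ p⁻¹ = -m⁻¹ + (7 / (4 * U)) • vecMulVec x x := by
  have hyx : y ⬝ᵥ x = U := by rw [hU, dotProduct_comm]
  have hmx : m *ᵥ x = y := by
    have hcoef : 7 / (3 * U) * U = 7 / 3 := by field_simp
    rw [hp, neg_add_smul_vecMulVec_mulVec, hyx, hcoef] at hpx
    linear_combination (norm := module) (-1 / 3 : ℝ) • hpx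
  have hpq : p * (-m⁻¹ + (7 / (4 * U)) • vecMulVec x x) = 1 := by
    refine hp ▸ neg_add_smul_vecMulVec_mul_eq_one (isHermitian_iff_isSymm.mp hmpos.isHermitian)
      hmpos.isUnit hmx ?_
    rw [hyx]
    field_simp
    ring
  exact ⟨IsUnit.of_mul_eq_one _ hpq, inv_eq_right_inv hpq⟩

theorem stmt_2 {l : ℕ} (m : Matrix (Fin l) (Fin l) ℝ) (hm : m.IsSymm)
    (hmpos : m.PosDef) (x y : Fin l → ℝ) (hx : x ≠ 0) (hy : y ≠ 0)
    (U : ℝ) (hU : U = x ⬝ᵥ y) (hU0 : U ≠ 0)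
    (p : Matrix (Fin l) (Fin l) ℝ)
    (hp : p = -m + (7 / (3 * U)) • vecMulVec y y)
    (hpx : (3 : ℝ) • p.mulVec x = (4 : ℝ) • y) :
    IsUnit p ∧ p⁻¹ = -m⁻¹ + (7 / (4 * U)) • vecMulVec x x :=
  stmt_2_general m hmpos x y U hU hU0 p hp hpx
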